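/- arXiv:2002.07250 — 2 statements merged into one kernel-verified Lean document; each statement's English description precedes it below -/
import Mathlib

section
/- K(sin(π/12)) = (1/(2√3))·√(π/√3)·Γ(1/6)/Γ(2/3), where K(k) := ∫₀^{π/2} dθ/√(1 − k² sin²θ). -/
/-!
Substitute `u = q(cos θ)³` in the Beta integral
`B(1/6, 1/2) = ∫₀¹ u^(-5/6) (1 - u)^(-1/2) du = √π Γ(1/6) / Γ(2/3)`, where
`q(c) = (1 + c) / D(c)` and `D(c) = (1 + √3) + (1 - √3) c`. Then `q' = 2√3 / D²` and
`q (1 - q³) = 36 sin²θ (1 - k² sin²θ) / (√3 D⁴)` with `k² = sin²(π/12) = (2 - √3)/4`, so the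
integrand becomes `√3 · 3^(1/4) / √(1 - k² sin²θ)` on `[0, π]`, and that integral is `2 K(k)` by the
symmetry `θ ↦ π - θ`.
-/

open Real Set MeasureTheory intervalIntegral

lemma ofReal_rpow_mul_one_sub_rpow {a b u : ℝ} (hu : u ∈ Icc (0 : ℝ) 1) :
    ((u ^ (a - 1) * (1 - u) ^ (b - 1) : ℝ) : ℂ)
      = (u : ℂ) ^ ((a : ℂ) - 1) * (1 - (u : ℂ)) ^ ((b : ℂ) - 1) := by
  push_cast [Complex.ofReal_cpow hu.1, Complex.ofReal_cpow (sub_nonneg.2 hu.2)]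
  rfl

lemma intervalIntegrable_rpow_mul_one_sub_rpow {a b : ℝ} (ha : 0 < a) (hb : 0 < b) :
    IntervalIntegrable (fun u : ℝ ↦ u ^ (a - 1) * (1 - u) ^ (b - 1)) volume 0 1 := by
  rw [intervalIntegrable_iff_integrableOn_Ioc_of_le zero_le_one]
  have h : IntegrableOn _ (Ioc (0 : ℝ) 1) :=
    (Complex.betaIntegral_convergent (u := a) (v := b) (by simpa) (by simpa)).1.re
  refine h.congr_fun (fun u hu ↦ ?_) measurableSet_Ioc
  simp only [RCLike.re_to_complex, ← ofReal_rpow_mul_one_sub_rpow (Ioc_subset_Icc_self hu),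
    Complex.ofReal_re]

lemma integral_rpow_mul_one_sub_rpow {a b : ℝ} (ha : 0 < a) (hb : 0 < b) :
    ∫ u in (0 : ℝ)..1, u ^ (a - 1) * (1 - u) ^ (b - 1) = Gamma a * Gamma b / Gamma (a + b) := by
  apply Complex.ofReal_injective
  have hB := Complex.betaIntegral_eq_Gamma_mul_div a b (by simpa) (by simpa)
  rw [Complex.betaIntegral] at hB
  rw [← intervalIntegral.integral_ofReal, Complex.ofReal_div, Complex.ofReal_mul,
    ← Complex.Gamma_ofReal, ← Complex.Gamma_ofReal, ← Complex.Gamma_ofReal, Complex.ofReal_add, ← hB]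
  refine integral_congr fun u hu ↦ ?_
  rw [uIcc_of_le zero_le_one] at hu
  exact ofReal_rpow_mul_one_sub_rpow hu

lemma integral_comp_sin_zero_pi {g : ℝ → ℝ}
    (hg : IntervalIntegrable (fun θ ↦ g (sin θ)) volume 0 π) :
    ∫ θ in (0 : ℝ)..π, g (sin θ) = 2 * ∫ θ in (0 : ℝ)..π / 2, g (sin θ) := by
  have hhalf : π / 2 ∈ uIcc 0 π := by
    rw [uIcc_of_le pi_pos.le]; constructor <;> linarith [pi_pos]
  have hreflect : ∫ θ in π / 2..π, g (sin θ) = ∫ θ in (0 : ℝ)..π / 2, g (sin θ) := by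
    simpa [sin_pi_sub, show π - π / 2 = π / 2 by ring] using
      (integral_comp_sub_left (fun θ ↦ g (sin θ)) π (a := 0) (b := π / 2)).symm
  rw [← integral_add_adjacent_intervals (hg.mono_set (uIcc_subset_uIcc_left hhalf))
    (hg.mono_set (uIcc_subset_uIcc_right hhalf)), hreflect, two_mul]

lemma one_sub_mul_sin_sq_pos {m : ℝ} (hm : m < 1) (θ : ℝ) : 0 < 1 - m * sin θ ^ 2 := by
  rcases le_or_gt m 0 with hm0 | hm0
  · nlinarith [sq_nonneg (sin θ)]
  · nlinarith [sin_sq_le_one θ]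

lemma continuous_one_div_sqrt_one_sub_mul_sin_sq {m : ℝ} (hm : m < 1) :
    Continuous fun θ ↦ 1 / √(1 - m * sin θ ^ 2) :=
  continuous_const.div (by fun_prop) fun θ ↦ (sqrt_pos.2 (one_sub_mul_sin_sq_pos hm θ)).ne'

lemma one_lt_sqrt_three : 1 < √3 := by
  rw [lt_sqrt zero_le_one]; norm_num

lemma two_sub_sqrt_three_div_four_lt_one : (2 - √3) / 4 < 1 := by
  linarith [sqrt_nonneg 3]

noncomputable def moebiusDenom (c : ℝ) : ℝ := (1 + √3) + (1 - √3) * c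

noncomputable def moebius (c : ℝ) : ℝ := (1 + c) / moebiusDenom c

lemma moebiusDenom_pos {c : ℝ} (hc : c ≤ 1) : 0 < moebiusDenom c := by
  unfold moebiusDenom; nlinarith [one_lt_sqrt_three]

lemma hasDerivAt_moebius {c : ℝ} (hc : c ≤ 1) :
    HasDerivAt moebius (2 * √3 / moebiusDenom c ^ 2) c := by
  have hD : HasDerivAt moebiusDenom (1 - √3) c :=
    (((hasDerivAt_id' c).const_mul (1 - √3)).const_add (1 + √3)).congr_deriv (mul_one _)
  refine (((hasDerivAt_id' c).const_add 1).div hD (moebiusDenom_pos hc).ne').congr_deriv ?_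
  rw [moebiusDenom]
  ring

lemma moebius_one : moebius 1 = 1 := by
  norm_num [moebius, moebiusDenom]

lemma moebius_neg_one : moebius (-1) = 0 := by
  norm_num [moebius]

lemma moebius_lt_one {c : ℝ} (hc : c < 1) : moebius c < 1 := by
  rw [moebius, div_lt_one (moebiusDenom_pos hc.le), moebiusDenom]
  nlinarith [one_lt_sqrt_three]

lemma moebius_le_one {c : ℝ} (hc : c ≤ 1) : moebius c ≤ 1 := by
  rw [moebius, div_le_one (moebiusDenom_pos hc), moebiusDenom]
  nlinarith [one_lt_sqrt_three]

lemma moebius_mul_one_sub_pow_three {c : ℝ} (hc : c ≤ 1) :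
    moebius c * (1 - moebius c ^ 3)
      = 36 * (1 - c ^ 2) * (1 - (2 - √3) / 4 * (1 - c ^ 2)) / (√3 * moebiusDenom c ^ 4) := by
  have hD := (moebiusDenom_pos hc).ne'
  have h3 : √3 ^ 2 = 3 := sq_sqrt (by norm_num)
  rw [moebius]
  field_simp
  rw [moebiusDenom]
  linear_combination 4 * (6 - 6 * c ^ 4 + 3 * √3 - 6 * √3 * c ^ 2 + 3 * √3 * c ^ 4 + √3 ^ 2
    - 2 * √3 ^ 2 * c + 2 * √3 ^ 2 * c ^ 3 - √3 ^ 2 * c ^ 4) * h3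

lemma rpow_pow_three_mul {t : ℝ} (ht0 : 0 < t) (ht1 : t < 1) :
    (t ^ 3) ^ ((1 / 6 : ℝ) - 1) * (1 - t ^ 3) ^ ((1 / 2 : ℝ) - 1) * (3 * t ^ 2)
      = 3 / √(t * (1 - t ^ 3)) := by
  have ht3 : 0 ≤ 1 - t ^ 3 := by
    linarith [pow_le_one₀ ht0.le ht1.le (n := 3)]
  have h1 : (t ^ 3) ^ ((1 / 6 : ℝ) - 1) * t ^ 2 = (√t)⁻¹ := by
    rw [← rpow_natCast, ← rpow_mul ht0.le, ← rpow_natCast t 2, ← rpow_add ht0, sqrt_eq_rpow,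
      ← rpow_neg ht0.le]
    norm_num
  have h2 : (1 - t ^ 3) ^ ((1 / 2 : ℝ) - 1) = (√(1 - t ^ 3))⁻¹ := by
    rw [sqrt_eq_rpow, ← rpow_neg ht3]
    norm_num
  calc _ = 3 * ((t ^ 3) ^ ((1 / 6 : ℝ) - 1) * t ^ 2) * (1 - t ^ 3) ^ ((1 / 2 : ℝ) - 1) := by ring
    _ = _ := by rw [h1, h2, sqrt_mul ht0.le]; field_simp

lemma moebius_cos_mem_Ioo {θ : ℝ} (hθ : θ ∈ Ioo 0 π) : moebius (cos θ) ∈ Ioo 0 1 := by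
  have hs := sin_pos_of_pos_of_lt_pi hθ.1 hθ.2
  have hc : cos θ < 1 := by nlinarith [sin_sq_add_cos_sq θ, cos_le_one θ]
  have hc' : -1 < cos θ := by nlinarith [sin_sq_add_cos_sq θ, neg_one_le_cos θ]
  exact ⟨div_pos (by linarith) (moebiusDenom_pos hc.le), moebius_lt_one hc⟩

lemma moebius_cos_mem_Icc (θ : ℝ) : moebius (cos θ) ∈ Icc 0 1 :=
  ⟨div_nonneg (by linarith [neg_one_le_cos θ]) (moebiusDenom_pos (cos_le_one θ)).le,
    moebius_le_one (cos_le_one θ)⟩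

lemma sqrt_moebius_cos_mul_one_sub_pow_three {θ : ℝ} (hθ : θ ∈ Ioo 0 π) :
    √(moebius (cos θ) * (1 - moebius (cos θ) ^ 3))
      = 6 * sin θ / moebiusDenom (cos θ) ^ 2 * (√(1 - (2 - √3) / 4 * sin θ ^ 2) / √√3) := by
  have hs := sin_pos_of_pos_of_lt_pi hθ.1 hθ.2
  rw [moebius_mul_one_sub_pow_three (cos_le_one θ), ← sin_sq,
    ← sqrt_div (one_sub_mul_sin_sq_pos two_sub_sqrt_three_div_four_lt_one θ).le,
    ← sqrt_sq (by positivity : 0 ≤ 6 * sin θ / moebiusDenom (cos θ) ^ 2),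
    ← sqrt_mul (sq_nonneg _)]
  congr 1
  field_simp
  ring

lemma beta_sixth_half_integrand_moebius_cos_mul_deriv {θ : ℝ} (hθ : θ ∈ Ioo 0 π) :
    (moebius (cos θ) ^ 3) ^ ((1 / 6 : ℝ) - 1) * (1 - moebius (cos θ) ^ 3) ^ ((1 / 2 : ℝ) - 1)
        * (3 * moebius (cos θ) ^ 2 * (2 * √3 / moebiusDenom (cos θ) ^ 2 * -sin θ))
      = -(√3 * √√3) / √(1 - (2 - √3) / 4 * sin θ ^ 2) := by
  have hs := sin_pos_of_pos_of_lt_pi hθ.1 hθ.2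
  have hD := moebiusDenom_pos (cos_le_one θ)
  have hq := moebius_cos_mem_Ioo hθ
  calc _ = 3 / √(moebius (cos θ) * (1 - moebius (cos θ) ^ 3))
          * (2 * √3 / moebiusDenom (cos θ) ^ 2 * -sin θ) := by
        rw [← rpow_pow_three_mul hq.1 hq.2]; ring
    _ = _ := by
      rw [sqrt_moebius_cos_mul_one_sub_pow_three hθ]
      field_simp
      ring

lemma integral_beta_sixth_half_eq_integral_zero_pi :
    ∫ u in (0 : ℝ)..1, u ^ ((1 / 6 : ℝ) - 1) * (1 - u) ^ ((1 / 2 : ℝ) - 1)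
      = √3 * √√3 * ∫ θ in (0 : ℝ)..π, 1 / √(1 - (2 - √3) / 4 * sin θ ^ 2) := by
  set g : ℝ → ℝ := fun u ↦ u ^ ((1 / 6 : ℝ) - 1) * (1 - u) ^ ((1 / 2 : ℝ) - 1)
  set f : ℝ → ℝ := fun θ ↦ moebius (cos θ) ^ 3
  set f' : ℝ → ℝ := fun θ ↦
    3 * moebius (cos θ) ^ 2 * (2 * √3 / moebiusDenom (cos θ) ^ 2 * -sin θ)
  have hf : ∀ θ, HasDerivAt f (f' θ) θ := fun θ ↦
    (((hasDerivAt_moebius (cos_le_one θ)).comp θ (hasDerivAt_cos θ)).pow 3).congr_deriv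
      (by simp [f'])
  have hfg : EqOn (fun θ ↦ (g ∘ f) θ * f' θ)
      (fun θ ↦ -(√3 * √√3) * (1 / √(1 - (2 - √3) / 4 * sin θ ^ 2))) (uIoo 0 π) := by
    intro θ hθ
    rw [uIoo_of_le pi_pos.le] at hθ
    simp only [g, f, f', Function.comp, beta_sixth_half_integrand_moebius_cos_mul_deriv hθ]
    ring
  have hf_Ioo : f '' Ioo (min 0 π) (max 0 π) ⊆ Ioo 0 1 := by
    rintro _ ⟨θ, hθ, rfl⟩
    rw [min_eq_left pi_pos.le, max_eq_right pi_pos.le] at hθ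
    obtain ⟨hq0, hq1⟩ := moebius_cos_mem_Ioo hθ
    exact ⟨by positivity, pow_lt_one₀ hq0.le hq1 (by norm_num)⟩
  have hf_Icc : f '' uIcc 0 π ⊆ Icc 0 1 := by
    rintro _ ⟨θ, -, rfl⟩
    obtain ⟨hq0, hq1⟩ := moebius_cos_mem_Icc θ
    exact ⟨by positivity, pow_le_one₀ hq0 hq1⟩
  have hg_cont : ContinuousOn g (Ioo 0 1) := fun u hu ↦
    ((continuousAt_rpow_const _ _ (Or.inl hu.1.ne')).mul
      ((continuousAt_rpow_const _ _ (Or.inl (sub_pos.2 hu.2).ne')).comp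
        (continuous_const.sub continuous_id).continuousAt)).continuousWithinAt
  have hcov := integral_comp_mul_deriv''' (a := 0) (b := π) (f := f) (f' := f') (g := g)
    (HasDerivAt.continuousOn fun θ _ ↦ hf θ) (fun θ _ ↦ (hf θ).hasDerivWithinAt)
    (hg_cont.mono hf_Ioo)
    (((intervalIntegrable_iff_integrableOn_Icc_of_le zero_le_one).1
      (intervalIntegrable_rpow_mul_one_sub_rpow (by norm_num) (by norm_num))).mono_set hf_Icc)
    ((intervalIntegrable_iff').1 ((((continuous_one_div_sqrt_one_sub_mul_sin_sq
      two_sub_sqrt_three_div_four_lt_one).const_mul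
      _).intervalIntegrable 0 π).congr_uIoo hfg.symm))
  have hf0 : f 0 = 1 := by simp [f, moebius_one]
  have hfπ : f π = 0 := by simp [f, moebius_neg_one]
  rw [integral_congr_uIoo hfg, intervalIntegral.integral_const_mul, hf0, hfπ,
    integral_symm 0 1] at hcov
  linarith

lemma sin_pi_div_twelve_sq : sin (π / 12) ^ 2 = (2 - √3) / 4 := by
  rw [sin_sq_eq_half_sub, show 2 * (π / 12) = π / 6 by ring, cos_pi_div_six]
  ring

theorem K_sin15_gamma :
    ∫ θ in (0:ℝ)..(π/2),
        1 / Real.sqrt (1 - (Real.sin (π/12))^2 * Real.sin θ ^ 2)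
      = (1 / (2 * Real.sqrt 3)) * Real.sqrt (π / Real.sqrt 3) *
          (Real.Gamma (1/6) / Real.Gamma (2/3)) := by
  have hbeta := integral_rpow_mul_one_sub_rpow (a := 1 / 6) (b := 1 / 2) (by norm_num) (by norm_num)
  rw [integral_beta_sixth_half_eq_integral_zero_pi,
    integral_comp_sin_zero_pi (g := fun y ↦ 1 / √(1 - (2 - √3) / 4 * y ^ 2))
      ((continuous_one_div_sqrt_one_sub_mul_sin_sq
      two_sub_sqrt_three_div_four_lt_one).intervalIntegrable 0 π),
    Gamma_one_half_eq, show (1 / 6 : ℝ) + 1 / 2 = 2 / 3 by norm_num] at hbeta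
  rw [sin_pi_div_twelve_sq, sqrt_div pi_pos.le]
  field_simp at hbeta ⊢
  linear_combination hbeta
end

section
/- Legendre's singular modulus for N = 3: with k := sin(π/12) = ½√(2 − √3) and k' := √(1 − k²) = cos(π/12), one has K(k')/K(k) = √3, where K(k) := ∫₀^{π/2} dθ/√(1 − k² sin²θ). -/
/-!
Jacobi's cubic transformation `sin φ = W (sin θ)`, `W x = x (2√3 + (2 - √3) x²) / (2 + √3 x²)`,
maps `[0, π/2]` onto itself and turns `dφ / √(1 - k'² sin² φ)` into `√3 dθ / √(1 - k² sin² θ)`.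
Indeed, with `4k² = 2 - √3`, `4k'² = 2 + √3` and `d = 2 + √3 x²`, one has
`1 - W² = (1 - x²) ((2 - 4k² x²) / d)²`, `1 - k'² W² = (1 - k² x²) ((2 - x²) / d)²`
and `W' = √3 (2 - x²) (2 - 4k² x²) / d²`. Hence `K(k') = √3 K(k)`.
-/

open Real Set

noncomputable def ellipticK (k : ℝ) : ℝ :=
  ∫ θ in (0:ℝ)..(π / 2), 1 / √(1 - k ^ 2 * sin θ ^ 2)

lemma ellipticK_pos {k : ℝ} (hk : k ^ 2 < 1) : 0 < ellipticK k := by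
  have hden (θ : ℝ) : 0 < 1 - k ^ 2 * sin θ ^ 2 := by
    nlinarith [sin_sq_le_one θ, sq_nonneg (sin θ), sq_nonneg k]
  have hcont : Continuous fun θ => 1 / √(1 - k ^ 2 * sin θ ^ 2) :=
    continuous_const.div (by fun_prop) fun θ => (sqrt_pos.2 (hden θ)).ne'
  exact intervalIntegral.intervalIntegral_pos_of_pos (hcont.intervalIntegrable _ _)
    (fun θ => one_div_pos.2 (sqrt_pos.2 (hden θ))) (by positivity)

theorem ellipticK_eq_mul_of_substitution {k l M : ℝ} {φ φ' : ℝ → ℝ}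
    (hφ : ContinuousOn φ (Icc 0 (π / 2))) (hφ0 : φ 0 = 0) (hφ1 : φ (π / 2) = π / 2)
    (hderiv : ∀ θ ∈ Ioo 0 (π / 2), HasDerivAt φ (φ' θ) θ)
    (hmono : ∀ θ ∈ Ioo 0 (π / 2), 0 ≤ φ' θ)
    (htransform : ∀ θ ∈ Ioo 0 (π / 2),
      φ' θ * (1 / √(1 - l ^ 2 * sin (φ θ) ^ 2)) = M * (1 / √(1 - k ^ 2 * sin θ ^ 2))) :
    ellipticK l = M * ellipticK k := by
  have hpi : (0:ℝ) ≤ π / 2 := by positivity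
  have hsubst := intervalIntegral.integral_deriv_smul_comp_of_deriv_nonneg
    (g := fun u => 1 / √(1 - l ^ 2 * sin u ^ 2)) (by rwa [uIcc_of_le hpi])
    (by simpa [hpi] using hderiv) (by simpa [hpi] using hmono)
  rw [hφ0, hφ1] at hsubst
  rw [ellipticK, ← hsubst, ellipticK, ← intervalIntegral.integral_const_mul]
  exact intervalIntegral.integral_congr_Ioo_of_le hpi htransform

lemma sin_mem_Ioo_zero_one {θ : ℝ} (hθ : θ ∈ Ioo 0 (π / 2)) : sin θ ∈ Ioo 0 1 :=
  ⟨sin_pos_of_pos_of_lt_pi hθ.1 (by linarith [hθ.2, pi_pos]),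
    sin_pi_div_two ▸
      sin_lt_sin_of_lt_of_le_pi_div_two (by linarith [hθ.1, pi_pos]) le_rfl hθ.2⟩

theorem ellipticK_eq_mul_of_sin_substitution {k l M : ℝ} {W W' : ℝ → ℝ}
    (hk : k ^ 2 ≤ 1) (hl : l ^ 2 ≤ 1)
    (hWc : ContinuousOn W (Icc 0 1)) (hW0 : W 0 = 0) (hW1 : W 1 = 1)
    (hderiv : ∀ s ∈ Ioo 0 1, HasDerivAt W (W' s) s) (hmono : ∀ s ∈ Ioo 0 1, 0 ≤ W' s)
    (hmaps : MapsTo W (Ioo 0 1) (Ioo (-1) 1))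
    (hmod : ∀ s ∈ Ioo 0 1, W' s * √(1 - s ^ 2) * √(1 - k ^ 2 * s ^ 2)
      = M * (√(1 - W s ^ 2) * √(1 - l ^ 2 * W s ^ 2))) :
    ellipticK l = M * ellipticK k := by
  refine ellipticK_eq_mul_of_substitution (φ := fun θ => arcsin (W (sin θ)))
    (φ' := fun θ => 1 / √(1 - W (sin θ) ^ 2) * (W' (sin θ) * cos θ)) ?_ ?_ ?_ ?_ ?_ ?_
  · refine continuous_arcsin.comp_continuousOn (hWc.comp continuous_sin.continuousOn ?_)
    intro θ hθ
    exact ⟨sin_nonneg_of_nonneg_of_le_pi hθ.1 (by linarith [hθ.2, pi_pos]), sin_le_one θ⟩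
  · simp [hW0]
  · simp [hW1]
  · intro θ hθ
    have hs := sin_mem_Ioo_zero_one hθ
    exact (hasDerivAt_arcsin (hmaps hs).1.ne' (hmaps hs).2.ne).comp θ
      ((hderiv _ hs).comp θ (hasDerivAt_sin θ))
  · intro θ hθ
    have := hmono _ (sin_mem_Ioo_zero_one hθ)
    have := cos_nonneg_of_mem_Icc ⟨by linarith [hθ.1, pi_pos], hθ.2.le⟩
    positivity
  · intro θ hθ
    have hs := sin_mem_Ioo_zero_one hθ
    obtain ⟨hW₁, hW₂⟩ := hmaps hs
    have hWsq : W (sin θ) ^ 2 < 1 := by nlinarith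
    have hA : 0 < √(1 - W (sin θ) ^ 2) := sqrt_pos.2 (by linarith)
    have hB : 0 < √(1 - l ^ 2 * W (sin θ) ^ 2) :=
      sqrt_pos.2 (by nlinarith [sq_nonneg (W (sin θ))])
    have hC : 0 < √(1 - k ^ 2 * sin θ ^ 2) :=
      sqrt_pos.2 (by nlinarith [sq_nonneg (sin θ), hs.1, hs.2])
    simp only [sin_arcsin hW₁.le hW₂.le,
      cos_eq_sqrt_one_sub_sin_sq (by linarith [hθ.1, pi_pos]) hθ.2.le]
    have key := hmod _ hs
    set A := √(1 - W (sin θ) ^ 2)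
    set B := √(1 - l ^ 2 * W (sin θ) ^ 2)
    set C := √(1 - k ^ 2 * sin θ ^ 2)
    field_simp
    linear_combination key

noncomputable def cubicTransform (x : ℝ) : ℝ :=
  x * (2 * √3 + (2 - √3) * x ^ 2) / (2 + √3 * x ^ 2)

lemma sqrt_three_sq : √3 ^ 2 = 3 := sq_sqrt (by norm_num)

lemma cubicTransform_zero : cubicTransform 0 = 0 := by simp [cubicTransform]

lemma cubicTransform_one : cubicTransform 1 = 1 := by
  rw [cubicTransform, div_eq_one_iff_eq (by positivity)]
  ring

lemma hasDerivAt_cubicTransform (x : ℝ) : HasDerivAt cubicTransform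
    (√3 * (2 - x ^ 2) * (2 - (2 - √3) * x ^ 2) / (2 + √3 * x ^ 2) ^ 2) x := by
  have hnum := (hasDerivAt_id' x).mul
    (((hasDerivAt_pow 2 x).const_mul (2 - √3)).const_add (2 * √3))
  have hden := ((hasDerivAt_pow 2 x).const_mul √3).const_add 2
  refine (hnum.div hden (by positivity)).congr_deriv ?_
  simp only [Pi.mul_apply]
  congr 1
  linear_combination -4 * x ^ 2 * sqrt_three_sq

lemma one_sub_cubicTransform_sq (x : ℝ) : 1 - cubicTransform x ^ 2
    = (1 - x ^ 2) * ((2 - (2 - √3) * x ^ 2) / (2 + √3 * x ^ 2)) ^ 2 := by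
  have : 2 + √3 * x ^ 2 ≠ 0 := by positivity
  rw [cubicTransform]
  field_simp
  linear_combination 4 * x ^ 2 * (x ^ 2 - 1) * sqrt_three_sq

lemma one_sub_mul_cubicTransform_sq (x : ℝ) : 1 - (2 + √3) / 4 * cubicTransform x ^ 2
    = (1 - (2 - √3) / 4 * x ^ 2) * ((2 - x ^ 2) / (2 + √3 * x ^ 2)) ^ 2 := by
  have : 2 + √3 * x ^ 2 ≠ 0 := by positivity
  rw [cubicTransform]
  field_simp
  linear_combination
    (-(8 + 4 * √3) * x ^ 2 + (4 + 4 * √3) * x ^ 4 + (2 - √3) * x ^ 6) * sqrt_three_sq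

theorem ellipticK_eq_sqrt_three_mul {k l : ℝ} (hk : k ^ 2 = (2 - √3) / 4)
    (hl : l ^ 2 = (2 + √3) / 4) : ellipticK l = √3 * ellipticK k := by
  have hr0 := sqrt_nonneg 3
  have hr3 := sqrt_three_sq
  have hfactors (s : ℝ) (hs : s ∈ Ioo 0 1) : 0 < 1 - s ^ 2 ∧ 0 < 2 - s ^ 2 ∧
      0 < 2 - (2 - √3) * s ^ 2 ∧ 0 < 1 - (2 - √3) / 4 * s ^ 2 := by
    obtain ⟨hs0, hs1⟩ := hs
    refine ⟨?_, ?_, ?_, ?_⟩ <;> nlinarith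
  refine ellipticK_eq_mul_of_sin_substitution (W := cubicTransform) (by nlinarith) (by nlinarith)
    (fun x _ => (hasDerivAt_cubicTransform x).continuousAt.continuousWithinAt)
    cubicTransform_zero cubicTransform_one (fun x _ => hasDerivAt_cubicTransform x) ?_ ?_ ?_
  · intro s hs
    obtain ⟨-, h2, h3, -⟩ := hfactors s hs
    positivity
  · intro s hs
    obtain ⟨h1, -, h3, -⟩ := hfactors s hs
    have hW : 0 < 1 - cubicTransform s ^ 2 := by
      rw [one_sub_cubicTransform_sq]
      positivity
    exact abs_lt.mp (sq_lt_one_iff_abs_lt_one _ |>.mp (by linarith))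
  · intro s hs
    obtain ⟨h1, h2, h3, h4⟩ := hfactors s hs
    rw [hk, hl, one_sub_cubicTransform_sq, one_sub_mul_cubicTransform_sq, sqrt_mul h1.le,
      sqrt_mul h4.le, sqrt_sq (by positivity), sqrt_sq (by positivity)]
    field_simp

theorem legendre_singular_modulus :
    (∫ θ in (0:ℝ)..(π/2),
        1 / Real.sqrt (1 - (Real.sqrt (1 - (Real.sin (π/12))^2))^2 * Real.sin θ ^ 2))
      / (∫ θ in (0:ℝ)..(π/2),
        1 / Real.sqrt (1 - (Real.sin (π/12))^2 * Real.sin θ ^ 2))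
      = Real.sqrt 3 := by
  have hk : sin (π / 12) ^ 2 = (2 - √3) / 4 := by
    rw [sin_sq_eq_half_sub, show 2 * (π / 12) = π / 6 by ring, cos_pi_div_six]
    ring
  have hl : √(1 - sin (π / 12) ^ 2) ^ 2 = (2 + √3) / 4 := by
    rw [sq_sqrt (by nlinarith [sin_sq_le_one (π / 12)]), hk]
    ring
  change ellipticK _ / ellipticK _ = √3
  have hK := ellipticK_pos (k := sin (π / 12)) (by rw [hk]; nlinarith [sqrt_nonneg 3])
  rw [ellipticK_eq_sqrt_three_mul hk hl, mul_div_assoc, div_self hK.ne', mul_one]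
end
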